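/- arXiv:2404.18522 — 2 statements merged into one kernel-verified Lean document; each statement's English description precedes it below -/
import Mathlib

section
/- Let F, G : Fin (2^n) → R be defined by F(enc(T)) = f^{(i)}(T) and G(enc(T)) = g^{(j)}(T) (and 0 on non-encodings is vacuous since enc is a bijection onto [0, 2^n)). Then the cyclic/linear sequence convolution H(m) = Σ_{a+b=m} F(a) G(b), evaluated at m = enc(S) for a set S with |S| = i + j, equals Σ_{T ⊆ S, |T| = i} f(T) g(S \ T). -/
def enc {n : ℕ} (T : Finset (Fin n)) : ℕ := ∑ t ∈ T, 2 ^ (t : ℕ)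

def chop {R : Type*} [CommRing R] {n : ℕ}
    (f : Finset (Fin n) → R) (i : ℕ) (T : Finset (Fin n)) : R :=
  if T.card = i then f T else 0

/-- `seqEnc f i a` is `chop f i (enc⁻¹ a)` when `a < 2^n` and `0` otherwise:
since `enc` is a bijection onto `[0, 2^n)`, this sum has at most one term. -/
def seqEnc {R : Type*} [CommRing R] {n : ℕ}
    (f : Finset (Fin n) → R) (i : ℕ) (a : ℕ) : R :=
  ∑ T ∈ Finset.univ.filter (fun T : Finset (Fin n) => enc T = a), chop f i T

/-
The binary digit sum of `enc T` is `#T`. If `enc A + enc B = enc S` and `#A + #B = #S`, the digit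
sums add up exactly, so by Kummer's theorem (the number of carries in `a + b` is
`s(a) + s(b) - s(a + b)` for binary digit sums `s`) the addition has no carry: `A` and `B` are
disjoint with union `S`. So the pairs `(A, B)` with `#A = i`, `#B = j` contributing to the
convolution at `enc S` are exactly the `(T, S \ T)` with `T ⊆ S`, `#T = i`.
-/

open Finset

namespace Nat

theorem sum_digits_two_sum_two_pow (s : Finset ℕ) : (digits 2 (∑ i ∈ s, 2 ^ i)).sum = #s := by
  induction s using Finset.induction_on_max with
  | empty => simp
  | insert m s hlt ih =>
    have hm : m ∉ s := fun h => (hlt m h).false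
    have hlen : (digits 2 (∑ i ∈ s, 2 ^ i)).length ≤ m :=
      (digits_length_le_iff one_lt_two _).2 (geomSum_lt le_rfl hlt)
    have hdigits := digits_append_zeroes_append_digits (n := ∑ i ∈ s, 2 ^ i)
      (k := m - (digits 2 (∑ i ∈ s, 2 ^ i)).length) one_lt_two one_pos
    rw [Nat.add_sub_cancel' hlen, mul_one] at hdigits
    rw [sum_insert hm, card_insert_of_notMem hm, add_comm, ← hdigits]
    simp [ih]

theorem testBit_sum_two_pow {s : Finset ℕ} {k : ℕ} : (∑ i ∈ s, 2 ^ i).testBit k ↔ k ∈ s := by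
  rw [← mem_bitIndices, ← List.mem_toFinset, toFinset_bitIndices_sum_two_pow]

theorem two_pow_le_mod_two_pow_succ_of_testBit {a k : ℕ} (h : a.testBit k) :
    2 ^ k ≤ a % 2 ^ (k + 1) :=
  ge_two_pow_of_testBit (by simpa [testBit_mod_two_pow] using h)

theorem not_testBit_and_testBit_of_sum_digits_add {a b : ℕ}
    (h : (digits 2 (a + b)).sum = (digits 2 a).sum + (digits 2 b).sum) (k : ℕ) :
    ¬(a.testBit k ∧ b.testBit k) := by
  rintro ⟨ha, hb⟩
  have hval : padicValNat 2 ((a + b).choose b) = 0 := by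
    have := sub_one_mul_padicValNat_choose_eq_sub_sum_digits' (p := 2) (k := b) (n := a)
    rw [h, add_comm (digits 2 b).sum, Nat.sub_self] at this
    omega
  have hk : k ≤ log 2 (a + b) :=
    le_log_of_pow_le one_lt_two ((ge_two_pow_of_testBit ha).trans (le_add_right _ _))
  rw [padicValNat_choose' (b := log 2 (a + b) + 2) (by omega), Finset.card_eq_zero,
    filter_eq_empty_iff] at hval
  refine hval (x := k + 1) (mem_Ico.2 ⟨le_add_self, by omega⟩) ?_
  calc 2 ^ (k + 1) = 2 ^ k + 2 ^ k := by ring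
    _ ≤ b % 2 ^ (k + 1) + a % 2 ^ (k + 1) := add_le_add
        (two_pow_le_mod_two_pow_succ_of_testBit hb) (two_pow_le_mod_two_pow_succ_of_testBit ha)

end Nat

theorem Finset.disjoint_and_union_eq_of_sum_two_pow_add {A B S : Finset ℕ}
    (h : ∑ i ∈ A, 2 ^ i + ∑ i ∈ B, 2 ^ i = ∑ i ∈ S, 2 ^ i) (hc : #A + #B = #S) :
    Disjoint A B ∧ A ∪ B = S := by
  have hdigits : (Nat.digits 2 (∑ i ∈ A, 2 ^ i + ∑ i ∈ B, 2 ^ i)).sum =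
      (Nat.digits 2 (∑ i ∈ A, 2 ^ i)).sum + (Nat.digits 2 (∑ i ∈ B, 2 ^ i)).sum := by
    simp only [h, Nat.sum_digits_two_sum_two_pow, hc]
  have hdisj : Disjoint A B := disjoint_left.2 fun k hA hB =>
    Nat.not_testBit_and_testBit_of_sum_digits_add hdigits k
      ⟨Nat.testBit_sum_two_pow.2 hA, Nat.testBit_sum_two_pow.2 hB⟩
  exact ⟨hdisj, geomSum_injective le_rfl (by simp only [sum_union hdisj, h])⟩

theorem Finset.sum_antidiagonal_sum_filter_mul_sum_filter {ι κ M R : Type*} [AddMonoid M]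
    [HasAntidiagonal M] [DecidableEq M] [NonUnitalNonAssocSemiring R] (s : Finset ι) (t : Finset κ)
    (u : ι → M) (v : κ → M) (F : ι → R) (G : κ → R) (m : M) :
    ∑ p ∈ antidiagonal m, (∑ x ∈ s with u x = p.1, F x) * (∑ y ∈ t with v y = p.2, G y) =
      ∑ q ∈ s ×ˢ t with u q.1 + v q.2 = m, F q.1 * G q.2 := by
  rw [← sum_fiberwise_of_maps_to (s := (s ×ˢ t).filter fun q => u q.1 + v q.2 = m)
    (g := fun q => (u q.1, v q.2)) (t := antidiagonal m)
    (fun q hq => mem_antidiagonal.2 (mem_filter.1 hq).2)]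
  refine sum_congr rfl fun p hp => ?_
  rw [sum_mul_sum, ← sum_product', filter_filter, ← filter_product]
  refine sum_congr (filter_congr fun q _ => ?_) fun _ _ => rfl
  rw [Prod.ext_iff]
  exact ⟨fun ⟨h₁, h₂⟩ => ⟨by rw [h₁, h₂, mem_antidiagonal.1 hp], h₁, h₂⟩, And.right⟩

theorem enc_eq_sum_map {n : ℕ} (T : Finset (Fin n)) :
    enc T = ∑ i ∈ T.map Fin.valEmbedding, 2 ^ i := by
  rw [sum_map]; rfl

theorem enc_add_enc_eq_enc_iff {n : ℕ} {A B S : Finset (Fin n)} :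
    enc A + enc B = enc S ∧ #A + #B = #S ↔ A ⊆ S ∧ B = S \ A := by
  constructor
  · rintro ⟨h, hc⟩
    simp only [enc_eq_sum_map] at h
    obtain ⟨hd, hu⟩ := disjoint_and_union_eq_of_sum_two_pow_add h (by simpa only [card_map])
    rw [disjoint_map] at hd
    rw [← map_union, map_inj] at hu
    subst hu
    exact ⟨subset_union_left, (union_sdiff_cancel_left hd).symm⟩
  · rintro ⟨hA, rfl⟩
    refine ⟨?_, by rw [add_comm, card_sdiff_add_card_eq_card hA]⟩
    simp only [enc, add_comm (∑ t ∈ A, _), sum_sdiff hA]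

theorem chop_mul_chop {R : Type*} [CommRing R] {n : ℕ} (f g : Finset (Fin n) → R) (i j : ℕ)
    (A B : Finset (Fin n)) :
    chop f i A * chop g j B = if #A = i ∧ #B = j then f A * g B else 0 :=
  ite_zero_mul_ite_zero _ _ _ _

theorem filter_enc_add_enc_eq_enc {n i j : ℕ} {S : Finset (Fin n)} (hS : #S = i + j) :
    {q ∈ (univ ×ˢ univ : Finset (Finset (Fin n) × Finset (Fin n))) |
        enc q.1 + enc q.2 = enc S ∧ #q.1 = i ∧ #q.2 = j} =
      {T ∈ S.powerset | #T = i}.image fun T => (T, S \ T) := by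
  ext ⟨A, B⟩
  simp only [mem_filter, mem_univ, mem_product, true_and, mem_image, mem_powerset,
    Prod.mk.injEq]
  constructor
  · rintro ⟨h, rfl, hB⟩
    obtain ⟨hA, rfl⟩ := enc_add_enc_eq_enc_iff.1 ⟨h, by omega⟩
    exact ⟨A, ⟨hA, rfl⟩, rfl, rfl⟩
  · rintro ⟨A, ⟨hA, rfl⟩, rfl, rfl⟩
    obtain ⟨h, hc⟩ := enc_add_enc_eq_enc_iff.2 ⟨hA, rfl⟩
    exact ⟨h, rfl, by omega⟩

theorem seq_conv_at_enc {R : Type*} [CommRing R] {n i j : ℕ}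
    (f g : Finset (Fin n) → R) (S : Finset (Fin n)) (hS : S.card = i + j) :
    ∑ p ∈ Finset.HasAntidiagonal.antidiagonal (enc S), seqEnc f i p.1 * seqEnc g j p.2
      = ∑ T ∈ S.powerset.filter (fun T => T.card = i), f T * g (S \ T) := by
  unfold seqEnc
  rw [sum_antidiagonal_sum_filter_mul_sum_filter]
  simp only [chop_mul_chop]
  rw [← sum_filter, filter_filter, filter_enc_add_enc_eq_enc hS,
    sum_image fun _ _ _ _ h => (Prod.ext_iff.1 h).1]
end

section
/- If |A| = i, |B| = j, and enc(A) + enc(B) = enc(S) with |S| = i + j, then A and B are disjoint and A ∪ B = S. -/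
/-- bit count -/
def pc : ℕ → ℕ
  | 0 => 0
  | (n+1) => (n+1) % 2 + pc ((n+1)/2)
decreasing_by exact Nat.div_lt_self (Nat.succ_pos n) one_lt_two

lemma pc_bit (m r : ℕ) (hr : r < 2) : pc (2 * m + r) = pc m + r := by
  rcases Nat.eq_zero_or_pos (2 * m + r) with h | h
  · have hm : m = 0 := by omega
    have hr0 : r = 0 := by omega
    simp [hm, hr0, pc]
  · obtain ⟨k, hk⟩ := Nat.exists_eq_add_of_lt h
    have hpc : pc (k + 1) = (k + 1) % 2 + pc ((k + 1) / 2) := by rw [pc]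
    rw [show 2 * m + r = k + 1 by omega, hpc, show k + 1 = 2 * m + r by omega]
    rw [Nat.mul_add_mod, Nat.mul_add_div two_pos]
    simp [Nat.mod_eq_of_lt hr, Nat.div_eq_of_lt hr]
    omega

lemma pc_one : pc 1 = 1 := by simp [pc]

lemma testBit_add_pow (a : ℕ) : ∀ x k : ℕ, x.testBit a = false →
    (x + 2 ^ a).testBit k = (x.testBit k || decide (k = a)) := by
  induction a with
  | zero =>
    intro x k h
    have hx : x % 2 = 0 := by simpa [Nat.testBit_zero] using h
    cases k with
    | zero => simp [Nat.testBit_zero]; omega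
    | succ k =>
      rw [Nat.testBit_add_one, Nat.testBit_add_one]
      rw [show (x + 2^0)/2 = x / 2 by omega]
      simp
  | succ a ih =>
    intro x k h
    have h2 : (x / 2).testBit a = false := by rwa [Nat.testBit_div_two]
    have key : x + 2 ^ (a+1) = 2 * (x / 2 + 2 ^ a) + x % 2 := by
      rw [pow_succ]; omega
    cases k with
    | zero =>
      rw [key, Nat.testBit_zero, Nat.testBit_zero]
      simp [Nat.mul_add_mod]
    | succ k =>
      rw [key, Nat.testBit_add_one, Nat.testBit_add_one]
      rw [Nat.mul_add_div two_pos]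
      rw [Nat.div_eq_of_lt (by omega : x % 2 < 2), Nat.add_zero]
      rw [ih (x/2) k h2]
      simp [Nat.succ_inj]

lemma pc_add_pow (a : ℕ) : ∀ x : ℕ, x.testBit a = false → pc (x + 2 ^ a) = pc x + 1 := by
  induction a with
  | zero =>
    intro x h
    have hx : x % 2 = 0 := by simpa [Nat.testBit_zero] using h
    have h1 : x + 2^0 = 2 * (x/2) + 1 := by omega
    have h2 : pc x = pc (x/2) := by
      conv_lhs => rw [show x = 2 * (x/2) + 0 by omega]
      rw [pc_bit _ _ two_pos]; omega
    rw [h1, pc_bit _ _ one_lt_two, h2]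
  | succ a ih =>
    intro x h
    have h2 : (x / 2).testBit a = false := by rwa [Nat.testBit_div_two]
    have key : x + 2 ^ (a+1) = 2 * (x / 2 + 2 ^ a) + x % 2 := by
      rw [pow_succ]; omega
    rw [key, pc_bit _ _ (Nat.mod_lt _ two_pos), ih _ h2]
    have : x = 2 * (x/2) + x % 2 := by omega
    conv_rhs => rw [this, pc_bit _ _ (Nat.mod_lt _ two_pos)]
    omega

lemma pc_key : ∀ s a b : ℕ, a + b < s →
    pc (a + b) ≤ pc a + pc b ∧
    (pc (a + b) = pc a + pc b → ∀ k, ¬(a.testBit k = true ∧ b.testBit k = true)) := by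
  intro s
  induction s with
  | zero => omega
  | succ s ih =>
    intro a b hab
    rcases Nat.eq_zero_or_pos a with ha | ha
    · subst ha; simp
    rcases Nat.eq_zero_or_pos b with hb | hb
    · subst hb; simp
    have hae : a = 2 * (a/2) + a % 2 := by omega
    have hbe : b = 2 * (b/2) + b % 2 := by omega
    have hpa : pc a = pc (a/2) + a % 2 := by
      conv_lhs => rw [hae]
      exact pc_bit _ _ (Nat.mod_lt _ two_pos)
    have hpb : pc b = pc (b/2) + b % 2 := by
      conv_lhs => rw [hbe]
      exact pc_bit _ _ (Nat.mod_lt _ two_pos)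
    have hlt : a/2 + b/2 < s := by omega
    rcases Nat.lt_or_ge (a % 2 + b % 2) 2 with hr | hr
    · -- no carry at bit 0
      have hsum : a + b = 2 * (a/2 + b/2) + (a % 2 + b % 2) := by omega
      have hps : pc (a + b) = pc (a/2 + b/2) + (a % 2 + b % 2) := by
        rw [hsum]; exact pc_bit _ _ hr
      obtain ⟨ihle, iheq⟩ := ih (a/2) (b/2) hlt
      constructor
      · omega
      · intro heq k hk
        have heq2 : pc (a/2 + b/2) = pc (a/2) + pc (b/2) := by omega
        cases k with
        | zero =>
          simp only [Nat.testBit_zero, decide_eq_true_eq] at hk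
          omega
        | succ k =>
          rw [Nat.testBit_add_one, Nat.testBit_add_one] at hk
          exact iheq heq2 k hk
      -- carry case
    · have hr1 : a % 2 = 1 ∧ b % 2 = 1 := by omega
      have hsum : a + b = 2 * (a/2 + b/2 + 1) + 0 := by omega
      have hps : pc (a + b) = pc (a/2 + b/2 + 1) := by
        rw [hsum, pc_bit _ _ two_pos]; omega
      have hlt2 : (a/2 + b/2) + 1 < s := by omega
      have h1 := (ih (a/2 + b/2) 1 hlt2).1
      have h2 := (ih (a/2) (b/2) hlt).1
      rw [pc_one] at h1
      constructor
      · omega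
      · intro heq; omega

def encN (T : Finset ℕ) : ℕ := ∑ t ∈ T, 2 ^ t

lemma testBit_encN (T : Finset ℕ) : ∀ k, (encN T).testBit k = decide (k ∈ T) := by
  classical
  induction T using Finset.induction with
  | empty => simp [encN]
  | @insert a T ha ih =>
    intro k
    have hins : encN (insert a T) = encN T + 2 ^ a := by
      simp [encN, Finset.sum_insert ha, add_comm]
    have hbit : (encN T).testBit a = false := by
      rw [ih a]; simpa using ha
    rw [hins, testBit_add_pow a _ k hbit, ih k]
    by_cases h : k = a <;> by_cases h2 : k ∈ T <;> simp [h, h2, Finset.mem_insert] <;> tauto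

lemma pc_encN (T : Finset ℕ) : pc (encN T) = T.card := by
  classical
  induction T using Finset.induction with
  | empty => simp [encN, pc]
  | @insert a T ha ih =>
    have hins : encN (insert a T) = encN T + 2 ^ a := by
      simp [encN, Finset.sum_insert ha, add_comm]
    have hbit : (encN T).testBit a = false := by
      rw [testBit_encN]; simpa using ha
    rw [hins, pc_add_pow a _ hbit, ih, Finset.card_insert_of_notMem ha]

lemma main_nat (A B S : Finset ℕ) (h : encN A + encN B = encN S)
    (hc : A.card + B.card = S.card) : Disjoint A B ∧ A ∪ B = S := by
  classical
  have heq : pc (encN A + encN B) = pc (encN A) + pc (encN B) := by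
    rw [h, pc_encN, pc_encN, pc_encN, hc]
  have hkey := (pc_key (encN A + encN B + 1) (encN A) (encN B) (by omega)).2 heq
  have hdisj : Disjoint A B := by
    rw [Finset.disjoint_left]
    intro k hkA hkB
    exact hkey k ⟨by rw [testBit_encN]; simpa using hkA,
      by rw [testBit_encN]; simpa using hkB⟩
  refine ⟨hdisj, ?_⟩
  have hu : encN (A ∪ B) = encN S := by
    rw [encN, Finset.sum_union hdisj, ← h]; rfl
  ext k
  have := congrArg (fun x => x.testBit k) hu
  simp only [testBit_encN, decide_eq_decide] at this
  exact this

theorem enc_add_enc_disjoint {n i j : ℕ} (A B S : Finset (Fin n))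
    (hA : A.card = i) (hB : B.card = j) (hS : S.card = i + j)
    (h : enc A + enc B = enc S) :
    Disjoint A B ∧ A ∪ B = S := by
  classical
  set f : Fin n ↪ ℕ := ⟨Fin.val, Fin.val_injective⟩
  have hmap : ∀ T : Finset (Fin n), enc T = encN (T.map f) := by
    intro T; simp [enc, encN, Finset.sum_map, f]
  have hmain := main_nat (A.map f) (B.map f) (S.map f)
    (by rw [← hmap, ← hmap, ← hmap]; exact h)
    (by simp [Finset.card_map, hA, hB, hS])
  obtain ⟨hd, hu⟩ := hmain
  constructor
  · exact (Finset.disjoint_map f).mp hd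
  · have : (A ∪ B).map f = S.map f := by rw [Finset.map_union]; exact hu
    exact Finset.map_injective f this
end
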